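/- Let Ω ⊆ ℝⁿ be open, σ : Ω → M_{n×m}(ℝ) a C¹ matrix field with columns σ₁,…,σ_m, and U ∈ C²(Ω). Set q(x) = σ(x)ᵀ∇U(x) ∈ ℝᵐ, G(x) = |q(x)|² (the squared Hamiltonian H²(x,∇U(x)) for H(x,p) = |σ(x)ᵀp|), and let S(x) be the m×m matrix S(x) = σ(x)ᵀ D²U(x) σ(x) + ((Dσ_j(x)σ_i(x))·∇U(x))_{i,j=1,…,m}, with symmetric part S*(x) = (S(x) + S(x)ᵀ)/2. Then for every x ∈ Ω the identity −∇G(x) · (2σ(x)σ(x)ᵀ∇U(x)) = −4 ⟨S*(x) q(x), q(x)⟩ holds; in particular, if S*(x) is negative semidefinite for all x ∈ Ω, then U satisfies the Aronsson differential inequality −∇(H²(x,∇U(x))) · (H²)_p(x,∇U(x)) ≥ 0 pointwise in Ω. -/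

import Mathlib

open Set
open scoped RealInnerProductSpace

/-- The `j`-th column of the matrix field `σ`, as a vector field. -/
noncomputable def colVF {n m : ℕ}
    (σ : EuclideanSpace ℝ (Fin n) → Matrix (Fin n) (Fin m) ℝ) (j : Fin m)
    (x : EuclideanSpace ℝ (Fin n)) : EuclideanSpace ℝ (Fin n) :=
  (EuclideanSpace.equiv (Fin n) ℝ).symm (fun i => σ x i j)

/-- `q(x) = σ(x)ᵀ∇U(x) ∈ ℝᵐ`. -/
noncomputable def qVF {n m : ℕ}
    (σ : EuclideanSpace ℝ (Fin n) → Matrix (Fin n) (Fin m) ℝ)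
    (U : EuclideanSpace ℝ (Fin n) → ℝ) (x : EuclideanSpace ℝ (Fin n)) :
    EuclideanSpace ℝ (Fin m) :=
  (EuclideanSpace.equiv (Fin m) ℝ).symm (fun j => ⟪colVF σ j x, gradient U x⟫)

/-- `G(x) = |σ(x)ᵀ∇U(x)|² = H²(x,∇U(x))` for `H(x,p) = |σ(x)ᵀp|`. -/
noncomputable def GFun {n m : ℕ}
    (σ : EuclideanSpace ℝ (Fin n) → Matrix (Fin n) (Fin m) ℝ)
    (U : EuclideanSpace ℝ (Fin n) → ℝ) (x : EuclideanSpace ℝ (Fin n)) : ℝ :=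
  ‖qVF σ U x‖ ^ 2

/-- The matrix `S(x) = σ(x)ᵀ D²U(x) σ(x) + ((Dσ_j(x)σ_i(x))·∇U(x))_{i,j}`. -/
noncomputable def SMat {n m : ℕ}
    (σ : EuclideanSpace ℝ (Fin n) → Matrix (Fin n) (Fin m) ℝ)
    (U : EuclideanSpace ℝ (Fin n) → ℝ) (x : EuclideanSpace ℝ (Fin n)) :
    Matrix (Fin m) (Fin m) ℝ :=
  Matrix.of fun i j =>
    ⟪colVF σ i x, fderiv ℝ (gradient U) x (colVF σ j x)⟫ +
      ⟪fderiv ℝ (colVF σ j) x (colVF σ i x), gradient U x⟫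

/-- `(H²)_p(x,∇U(x)) = 2σ(x)σ(x)ᵀ∇U(x) = 2σ(x)q(x)`. -/
noncomputable def FVec {n m : ℕ}
    (σ : EuclideanSpace ℝ (Fin n) → Matrix (Fin n) (Fin m) ℝ)
    (U : EuclideanSpace ℝ (Fin n) → ℝ) (x : EuclideanSpace ℝ (Fin n)) :
    EuclideanSpace ℝ (Fin n) :=
  (EuclideanSpace.equiv (Fin n) ℝ).symm
    (fun k => 2 * ∑ j : Fin m, σ x k j * qVF σ U x j)

/-!
Differentiating `G = ∑ⱼ qⱼ²` along `F = 2 ∑ᵢ qᵢ σᵢ` gives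
`dG(F) = 4 ∑ᵢⱼ qᵢ qⱼ (⟪σⱼ, D²U σᵢ⟫ + ⟪Dσⱼ σᵢ, ∇U⟫)` by the product rule for `qⱼ = ⟪σⱼ, ∇U⟫`.
Inside a quadratic form a matrix may be replaced by its transpose or its symmetric part, so this
is `4 ⟨S q, q⟩ = 4 ⟨S* q, q⟩`; no symmetry of the Hessian is needed.
-/

section QuadraticForm

variable {ι R : Type*} [Fintype ι]

theorem sum_mul_sum_add_transpose_mul [CommSemiring R] (A B : ι → ι → R) (v : ι → R) :
    ∑ j, v j * ∑ i, (A j i + B i j) * v i = ∑ i, ∑ j, (A i j + B i j) * v j * v i := by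
  simp only [Finset.mul_sum, add_mul, mul_add, Finset.sum_add_distrib]
  congr 1
  · exact Finset.sum_congr rfl fun i _ => Finset.sum_congr rfl fun j _ => by ring
  · rw [Finset.sum_comm]
    exact Finset.sum_congr rfl fun i _ => Finset.sum_congr rfl fun j _ => by ring

theorem sum_sum_half_add_transpose_mul_mul [Field R] [NeZero (2 : R)] (S : Matrix ι ι R)
    (v : ι → R) :
    ∑ i, ∑ j, (S i j + S j i) / 2 * v j * v i = ∑ i, ∑ j, S i j * v j * v i := by
  have htranspose : ∑ i, ∑ j, S j i * v j * v i = ∑ i, ∑ j, S i j * v j * v i := by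
    rw [Finset.sum_comm]
    exact Finset.sum_congr rfl fun i _ => Finset.sum_congr rfl fun j _ => by ring
  have hsplit : ∀ i j, (S i j + S j i) / 2 * v j * v i =
      (S i j * v j * v i + S j i * v j * v i) / 2 := fun i j => by ring
  simp only [hsplit, ← Finset.sum_div, Finset.sum_add_distrib, htranspose, add_self_div_two]

end QuadraticForm

theorem ContDiffAt.gradient {F : Type*} [NormedAddCommGroup F] [InnerProductSpace ℝ F]
    [CompleteSpace F] {f : F → ℝ} {x : F} {m n : WithTop ℕ∞} (hf : ContDiffAt ℝ n f x)
    (hmn : m + 1 ≤ n) : ContDiffAt ℝ m (gradient f) x :=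
  (InnerProductSpace.toDual ℝ F).symm.contDiff.contDiffAt.comp x (hf.fderiv_right hmn)

theorem hasFDerivAt_sum_sq {E ι : Type*} [NormedAddCommGroup E] [NormedSpace ℝ E] [Fintype ι]
    {f : ι → E → ℝ} {f' : ι → E →L[ℝ] ℝ} {x : E} (hf : ∀ j, HasFDerivAt (f j) (f' j) x) :
    HasFDerivAt (fun y => ∑ j, f j y ^ 2) (∑ j, (2 * f j x) • f' j) x :=
  HasFDerivAt.fun_sum fun j _ => by simpa using (hf j).pow 2

section AronssonIdentity

variable {n m : ℕ} {σ : EuclideanSpace ℝ (Fin n) → Matrix (Fin n) (Fin m) ℝ}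
  {U : EuclideanSpace ℝ (Fin n) → ℝ} {x : EuclideanSpace ℝ (Fin n)}

theorem differentiableAt_colVF {j : Fin m} (h : ∀ i, DifferentiableAt ℝ (fun y => σ y i j) x) :
    DifferentiableAt ℝ (colVF σ j) x :=
  differentiableAt_euclidean.2 h

theorem gFun_eq_sum_sq (σ : EuclideanSpace ℝ (Fin n) → Matrix (Fin n) (Fin m) ℝ)
    (U : EuclideanSpace ℝ (Fin n) → ℝ) :
    GFun σ U = fun y => ∑ j, ⟪colVF σ j y, gradient U y⟫ ^ 2 := by
  funext y
  simp only [GFun, EuclideanSpace.norm_sq_eq, Real.norm_eq_abs, sq_abs]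
  rfl

theorem sMat_apply (i j : Fin m) :
    SMat σ U x i j = ⟪colVF σ i x, fderiv ℝ (gradient U) x (colVF σ j x)⟫ +
      ⟪fderiv ℝ (colVF σ j) x (colVF σ i x), gradient U x⟫ :=
  rfl

theorem fVec_eq_sum : FVec σ U x = ∑ i, (2 * qVF σ U x i) • colVF σ i x := by
  ext k
  simp [FVec, colVF, Finset.mul_sum, mul_left_comm, mul_comm]

theorem hasFDerivAt_gFun (hcol : ∀ j, DifferentiableAt ℝ (colVF σ j) x)
    (hgrad : DifferentiableAt ℝ (gradient U) x) :
    HasFDerivAt (GFun σ U)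
      (∑ j, (2 * qVF σ U x j) • fderiv ℝ (fun y => ⟪colVF σ j y, gradient U y⟫) x) x := by
  rw [gFun_eq_sum_sq]
  exact hasFDerivAt_sum_sq fun j => ((hcol j).inner ℝ hgrad).hasFDerivAt

theorem fderiv_inner_colVF_gradient_fVec (hcol : ∀ j, DifferentiableAt ℝ (colVF σ j) x)
    (hgrad : DifferentiableAt ℝ (gradient U) x) (j : Fin m) :
    fderiv ℝ (fun y => ⟪colVF σ j y, gradient U y⟫) x (FVec σ U x) =
      2 * ∑ i, (⟪colVF σ j x, fderiv ℝ (gradient U) x (colVF σ i x)⟫ +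
        ⟪fderiv ℝ (colVF σ j) x (colVF σ i x), gradient U x⟫) * qVF σ U x i := by
  rw [fderiv_inner_apply ℝ (hcol j) hgrad, fVec_eq_sum]
  simp only [map_sum, map_smul, inner_sum, sum_inner, real_inner_smul_left,
    real_inner_smul_right, ← Finset.sum_add_distrib, Finset.mul_sum]
  exact Finset.sum_congr rfl fun i _ => by ring

theorem exists_hasFDerivAt_gFun_neg_apply_fVec (hcol : ∀ j, DifferentiableAt ℝ (colVF σ j) x)
    (hgrad : DifferentiableAt ℝ (gradient U) x) :
    ∃ DG : EuclideanSpace ℝ (Fin n) →L[ℝ] ℝ, HasFDerivAt (GFun σ U) DG x ∧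
      -(DG (FVec σ U x)) =
        -4 * ∑ i, ∑ j, ((SMat σ U x i j + SMat σ U x j i) / 2) * qVF σ U x j * qVF σ U x i := by
  refine ⟨_, hasFDerivAt_gFun hcol hgrad, ?_⟩
  rw [sum_sum_half_add_transpose_mul_mul, sum_apply]
  simp only [smul_apply, smul_eq_mul,
    fderiv_inner_colVF_gradient_fVec hcol hgrad]
  simp only [sMat_apply]
  rw [← sum_mul_sum_add_transpose_mul
    (fun i j => ⟪colVF σ i x, fderiv ℝ (gradient U) x (colVF σ j x)⟫)
    (fun i j => ⟪fderiv ℝ (colVF σ j) x (colVF σ i x), gradient U x⟫), Finset.mul_sum]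
  rw [← Finset.sum_neg_distrib]
  exact Finset.sum_congr rfl fun j _ => by ring

end AronssonIdentity

/-- the identity
`-∇G(x)·(2σ(x)σ(x)ᵀ∇U(x)) = -4⟨S*(x)q(x), q(x)⟩` for the squared Hamiltonian
`G(x) = H²(x,∇U(x))`, `H(x,p) = |σ(x)ᵀp|`; in particular if `S*` is negative
semidefinite on `Ω` then `U` satisfies the Aronsson differential inequality
`-∇(H²(x,∇U(x)))·(H²)_p(x,∇U(x)) ≥ 0` pointwise in `Ω`. -/
theorem stmt_19 {n m : ℕ} (Ω : Set (EuclideanSpace ℝ (Fin n))) (hΩ : IsOpen Ω)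
    (σ : EuclideanSpace ℝ (Fin n) → Matrix (Fin n) (Fin m) ℝ)
    (hσ : ∀ i j, ContDiffOn ℝ 1 (fun x => σ x i j) Ω)
    (U : EuclideanSpace ℝ (Fin n) → ℝ) (hU : ContDiffOn ℝ 2 U Ω) :
    (∀ x ∈ Ω, ∃ DG : EuclideanSpace ℝ (Fin n) →L[ℝ] ℝ,
      HasFDerivAt (GFun σ U) DG x ∧
      -(DG (FVec σ U x)) =
        -4 * ∑ i : Fin m, ∑ j : Fin m,
          ((SMat σ U x i j + SMat σ U x j i) / 2) * qVF σ U x j * qVF σ U x i) ∧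
    ((∀ x ∈ Ω, ∀ v : Fin m → ℝ,
        (∑ i : Fin m, ∑ j : Fin m,
          ((SMat σ U x i j + SMat σ U x j i) / 2) * v j * v i) ≤ 0) →
      ∀ x ∈ Ω, ∃ DG : EuclideanSpace ℝ (Fin n) →L[ℝ] ℝ,
        HasFDerivAt (GFun σ U) DG x ∧ 0 ≤ -(DG (FVec σ U x))) := by
  have hidentity (x) (hx : x ∈ Ω) := exists_hasFDerivAt_gFun_neg_apply_fVec
    (fun j => differentiableAt_colVF fun i =>
      ((hσ i j).contDiffAt (hΩ.mem_nhds hx)).differentiableAt one_ne_zero)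
    (((hU.contDiffAt (hΩ.mem_nhds hx)).gradient (m := 1) le_rfl).differentiableAt one_ne_zero)
  refine ⟨hidentity, fun hconcave x hx => ?_⟩
  obtain ⟨DG, hDG, hDG_apply⟩ := hidentity x hx
  refine ⟨DG, hDG, ?_⟩
  have hquad := hconcave x hx (qVF σ U x)
  linarith
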